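/- Let R be a unital ring with involution, a ∈ R, and n ≥ 2. Then a is both Moore-Penrose invertible and group invertible if and only if a ∈ a(a*)^n a R ∩ R a(a*)^n a. -/

import Mathlib

/-!
Since `a = a (a†a)* = a a* (a†)*` and `a* = (a*)ⁿ (a#*)ⁿ⁻¹`, the element `a` lies in `a (a*)ⁿ R`;
the identity `a* = a* a a†` then inserts the final factor `a`. Membership in the left ideal is symmetric.

Conversely, `a ∈ a a* R` and `a ∈ R a* a` produce a {1,4}- and a {1,3}-inverse of `a`, whose
combination `a⁽¹'⁴⁾ a a⁽¹'³⁾` is the Moore–Penrose inverse. Writing these inner inverses out, the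
equation `a = a a⁽¹'³⁾ a` shows `a ∈ aⁿ R ⊆ a² R`, and dually `a ∈ R a²`, which gives `a#`.
-/

/-- `x` is a Moore–Penrose inverse of `a`. -/
def IsMPInverse {R : Type*} [Ring R] [StarRing R] (a x : R) : Prop :=
  a * x * a = a ∧ x * a * x = x ∧ star (a * x) = a * x ∧ star (x * a) = x * a

/-- `x` is a group inverse of `a`. -/
def IsGroupInverse {R : Type*} [Ring R] (a x : R) : Prop :=
  a * x * a = a ∧ x * a * x = x ∧ a * x = x * a

section GroupInverse

variable {R : Type*} [Ring R] {a y : R}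

theorem IsGroupInverse.self_mul_self_mul_eq (h : IsGroupInverse a y) : a * a * y = a := by
  rw [mul_assoc, h.2.2, ← mul_assoc, h.1]

theorem IsGroupInverse.mul_mul_self_eq (h : IsGroupInverse a y) : y * a * a = a := by
  rw [← h.2.2, h.1]

theorem IsGroupInverse.pow_succ_mul_pow (h : IsGroupInverse a y) (k : ℕ) :
    a ^ (k + 1) * y ^ k = a := by
  induction k with
  | zero => simp
  | succ k ih =>
    calc a ^ (k + 1 + 1) * y ^ (k + 1) = a ^ k * (a * a * y) * y ^ k := by
          rw [pow_succ _ (k + 1), pow_succ, pow_succ']; simp only [mul_assoc]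
      _ = a ^ (k + 1) * y ^ k := by rw [h.self_mul_self_mul_eq, pow_succ]
      _ = a := ih

theorem IsGroupInverse.pow_mul_pow_succ (h : IsGroupInverse a y) (k : ℕ) :
    y ^ k * a ^ (k + 1) = a := by
  induction k with
  | zero => simp
  | succ k ih =>
    calc y ^ (k + 1) * a ^ (k + 1 + 1) = y ^ k * (y * a * a) * a ^ k := by
          rw [pow_succ y, pow_succ' a (k + 1), pow_succ' a k]; simp only [mul_assoc]
      _ = y ^ k * a ^ (k + 1) := by rw [h.mul_mul_self_eq, pow_succ', mul_assoc]
      _ = a := ih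

theorem IsGroupInverse.star [StarMul R] (h : IsGroupInverse a y) :
    IsGroupInverse (star a) (star y) := by
  obtain ⟨h₁, h₂, h₃⟩ := h
  refine ⟨?_, ?_, ?_⟩
  · rw [← star_mul, ← star_mul, ← mul_assoc, h₁]
  · rw [← star_mul, ← star_mul, ← mul_assoc, h₂]
  · rw [← star_mul, ← star_mul, h₃]

theorem exists_isGroupInverse_of_eq {l r : R} (hr : a = a * a * r) (hl : a = l * a * a) :
    ∃ y, IsGroupInverse a y := by
  have hlr : a * r = l * a := by
    calc a * r = l * a * a * r := by rw [← hl]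
      _ = l * (a * a * r) := by simp only [mul_assoc]
      _ = l * a := by rw [← hr]
  have hal : a * l * a = a := by rw [mul_assoc, ← hlr, ← mul_assoc, ← hr]
  have har : a * r * a = a := by rw [hlr, ← hl]
  refine ⟨l * a * r, ?_, ?_, ?_⟩
  · simp only [← mul_assoc]; rw [hal, har]
  · calc l * a * r * a * (l * a * r) = l * (a * r * a) * (l * a * r) := by simp only [mul_assoc]
      _ = l * (a * l * a) * r := by rw [har]; simp only [mul_assoc]
      _ = l * a * r := by rw [hal]
  · calc a * (l * a * r) = a * l * a * r := by simp only [mul_assoc]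
      _ = l * (a * r * a) := by rw [hal, har, hlr]
      _ = l * a * r * a := by simp only [mul_assoc]

end GroupInverse

section StarRing

variable {R : Type*} [Ring R] [StarRing R] {a x : R}

theorem IsMPInverse.eq_mul_star_mul_star (h : IsMPInverse a x) : a = a * star a * star x := by
  rw [mul_assoc, ← star_mul, h.2.2.2, ← mul_assoc, h.1]

theorem IsMPInverse.eq_star_mul_star_mul (h : IsMPInverse a x) : a = star x * star a * a := by
  rw [← star_mul, h.2.2.1, h.1]

theorem IsMPInverse.star_mul_mul_eq (h : IsMPInverse a x) : star a * a * x = star a := by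
  rw [mul_assoc, ← h.2.2.1, ← star_mul, h.1]

theorem IsMPInverse.mul_mul_star_eq (h : IsMPInverse a x) : x * a * star a = star a := by
  rw [← h.2.2.2, ← star_mul, ← mul_assoc, h.1]

theorem IsMPInverse.exists_eq_mul_star_pow_mul_mul {y : R} (hx : IsMPInverse a x)
    (hy : IsGroupInverse a y) (k : ℕ) : ∃ r, a = a * star a ^ (k + 1) * a * r := by
  have hpow : star a ^ (k + 1) * a * x = star a ^ (k + 1) := by
    rw [pow_succ, mul_assoc, mul_assoc, ← mul_assoc (star a), hx.star_mul_mul_eq]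
  refine ⟨x * star y ^ k * star x, ?_⟩
  calc a = a * star a * star x := hx.eq_mul_star_mul_star
    _ = a * (star a ^ (k + 1) * star y ^ k) * star x := by rw [hy.star.pow_succ_mul_pow]
    _ = a * (star a ^ (k + 1) * a * x) * star y ^ k * star x := by rw [hpow]; simp only [mul_assoc]
    _ = a * star a ^ (k + 1) * a * (x * star y ^ k * star x) := by simp only [mul_assoc]

theorem IsMPInverse.exists_eq_mul_mul_star_pow_mul {y : R} (hx : IsMPInverse a x)
    (hy : IsGroupInverse a y) (k : ℕ) : ∃ l, a = l * (a * star a ^ (k + 1) * a) := by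
  have hpow : x * a * star a ^ (k + 1) = star a ^ (k + 1) := by
    rw [pow_succ', ← mul_assoc, hx.mul_mul_star_eq]
  refine ⟨star x * star y ^ k * x, ?_⟩
  calc a = star x * star a * a := hx.eq_star_mul_star_mul
    _ = star x * (star y ^ k * star a ^ (k + 1)) * a := by rw [hy.star.pow_mul_pow_succ]
    _ = star x * star y ^ k * (x * a * star a ^ (k + 1)) * a := by rw [hpow]; simp only [mul_assoc]
    _ = star x * star y ^ k * x * (a * star a ^ (k + 1) * a) := by simp only [mul_assoc]

theorem mul_star_mul_eq_and_isSelfAdjoint_of_eq_mul_star_mul {w : R} (h : a = w * star a * a) :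
    a * star w * a = a ∧ IsSelfAdjoint (a * star w) := by
  have hstar : star a * a * star w = star a := by
    conv_rhs => rw [h]
    simp only [star_mul, star_star, mul_assoc]
  have hw : a * star w = w * star a := by
    conv_lhs => rw [h]
    simp only [mul_assoc] at hstar ⊢
    rw [hstar]
  refine ⟨by rw [hw, ← h], ?_⟩
  rw [IsSelfAdjoint, hw, star_mul, star_star, hw]

theorem mul_star_mul_eq_and_isSelfAdjoint_of_eq_mul_mul_star {u : R} (h : a = a * star a * u) :
    a * star u * a = a ∧ IsSelfAdjoint (star u * a) := by
  have hstar : star u * a * star a = star a := by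
    conv_rhs => rw [h]
    simp only [star_mul, star_star, mul_assoc]
  have hu : star u * a = star a * u := by
    conv_lhs => rw [h]
    rw [← mul_assoc, ← mul_assoc, hstar]
  refine ⟨by rw [mul_assoc, hu, ← mul_assoc, ← h], ?_⟩
  rw [IsSelfAdjoint, hu, star_mul, star_star, hu]

theorem isMPInverse_mul_mul {p q : R} (hp : a * p * a = a) (hap : IsSelfAdjoint (a * p))
    (hq : a * q * a = a) (hqa : IsSelfAdjoint (q * a)) : IsMPInverse a (q * a * p) := by
  have haq : a * (q * a * p) = a * p := by rw [← mul_assoc, ← mul_assoc, hq]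
  have hqp : q * a * p * a = q * a := by simp only [mul_assoc]; rw [← mul_assoc a, hp]
  refine ⟨?_, ?_, ?_, ?_⟩
  · rw [haq, hp]
  · rw [hqp, mul_assoc q, haq, mul_assoc]
  · rw [haq]; exact hap
  · rw [hqp]; exact hqa

end StarRing

theorem stmt_17 {R : Type*} [Ring R] [StarRing R] (a : R) (n : ℕ) (hn : 2 ≤ n) :
    ((∃ x : R, IsMPInverse a x) ∧ (∃ y : R, IsGroupInverse a y)) ↔
      ((∃ r : R, a = a * (star a) ^ n * a * r) ∧
        (∃ r : R, a = r * (a * (star a) ^ n * a))) := by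
  obtain ⟨k, rfl⟩ : ∃ k, n = k + 1 + 1 := ⟨n - 2, by omega⟩
  constructor
  · rintro ⟨⟨x, hx⟩, ⟨y, hy⟩⟩
    exact ⟨hx.exists_eq_mul_star_pow_mul_mul hy _, hx.exists_eq_mul_mul_star_pow_mul hy _⟩
  · rintro ⟨⟨s, hs⟩, ⟨t, ht⟩⟩
    have ha14 : a = a * star a * (star a ^ (k + 1) * a * s) := by
      conv_lhs => rw [hs]
      rw [pow_succ']; simp only [mul_assoc]
    have ha13 : a = t * a * star a ^ (k + 1) * star a * a := by
      conv_lhs => rw [ht]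
      rw [pow_succ]; simp only [mul_assoc]
    obtain ⟨h14, sa14⟩ := mul_star_mul_eq_and_isSelfAdjoint_of_eq_mul_mul_star ha14
    obtain ⟨h13, sa13⟩ := mul_star_mul_eq_and_isSelfAdjoint_of_eq_mul_star_mul ha13
    refine ⟨⟨_, isMPInverse_mul_mul h13 sa13 h14 sa14⟩, exists_isGroupInverse_of_eq
      (r := a ^ k * star a * star t * a) (l := a * star s * star a * a ^ k) ?_ ?_⟩
    · conv_lhs => rw [← h13]
      simp only [star_mul, star_star, pow_succ, star_pow, mul_assoc]
    · conv_lhs => rw [← h14]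
      simp only [star_mul, star_star, pow_succ', star_pow, mul_assoc]
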